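/- arXiv:0801.2650 — 3 statements merged into one kernel-verified Lean document; each statement's English description precedes it below -/
import Mathlib

section
/- Let P(z) = z⁴ − z and Q(z) = z⁴ + z. There exists a unique strictly increasing real analytic diffeomorphism φ : ℝ → ℝ (i.e. φ is real analytic, strictly increasing, bijective, and its inverse is real analytic) such that P(z) = Q(φ(z)) for all z ∈ ℝ. Moreover, for this φ: the derivative φ′ is bounded on ℝ, the function z ↦ φ(z) − z·φ′(z) is bounded on ℝ, and φ(z)/z → 1 as z → +∞ and as z → −∞. -/
open Filter Topology

noncomputable section

/-- A strictly increasing real analytic diffeomorphism of the real line: real analytic,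
strictly increasing, bijective, with real analytic inverse. -/
def IsAnalyticDiffeo (φ : ℝ → ℝ) : Prop :=
  (∀ x : ℝ, AnalyticAt ℝ φ x) ∧ StrictMono φ ∧ Function.Bijective φ ∧
    ∃ ψ : ℝ → ℝ, (∀ x : ℝ, AnalyticAt ℝ ψ x) ∧
      Function.LeftInverse ψ φ ∧ Function.RightInverse ψ φ

/-!
The relation factors as `z⁴ - z - (w⁴ + w) = (z + w) ((z - w) (z² + w²) - 1)`. An increasing
`φ` meets the antidiagonal `w = -z` at most once, so by continuity its graph lies on the curve
`(z - w) (z² + w²) = 1`. For each `z` this curve has exactly one point `(z, w)`, given by Cardano's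
formula, which is analytic in `z`: this gives existence and uniqueness. On the curve
`0 < z - w ≤ 2` and `z² + w² ≥ 1/2`, and implicit differentiation gives
`D φ' = 3z² - 2zφ + φ² ∈ [0, 4D]` and `D (φ - z φ') = -3`, where `D = 3φ² - 2zφ + z² ≥ 1/4`.
-/

open Real

theorem AnalyticAt.rpow_const {f : ℝ → ℝ} {x : ℝ} (hf : AnalyticAt ℝ f x) (hx : 0 < f x)
    (r : ℝ) : AnalyticAt ℝ (fun y => f y ^ r) x := by
  have hexp : AnalyticAt ℝ (fun y => Real.exp (Real.log (f y) * r)) x := by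
    fun_prop (disch := exact hx)
  refine hexp.congr ?_
  filter_upwards [continuousAt_const.eventually_lt hf.continuousAt hx] with y hy
  exact (rpow_def_of_pos hy r).symm

theorem AnalyticAt.sqrt {f : ℝ → ℝ} {x : ℝ} (hf : AnalyticAt ℝ f x) (hx : 0 < f x) :
    AnalyticAt ℝ (fun y => √(f y)) x := by
  simpa only [sqrt_eq_rpow] using hf.rpow_const hx (1 / 2)

theorem quartic_eq_iff (z w : ℝ) :
    z ^ 4 - z = w ^ 4 + w ↔ z + w = 0 ∨ (z - w) * (z ^ 2 + w ^ 2) = 1 := by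
  rw [← sub_eq_zero, show z ^ 4 - z - (w ^ 4 + w) = (z + w) * ((z - w) * (z ^ 2 + w ^ 2) - 1)
    by ring, mul_eq_zero, sub_eq_zero]

theorem strictAnti_curve (z : ℝ) : StrictAnti fun w : ℝ => (z - w) * (z ^ 2 + w ^ 2) := by
  intro w₁ w₂ h
  nlinarith [mul_pos (sub_pos.2 h) (mul_pos (sub_pos.2 h) (sub_pos.2 h)),
    mul_nonneg (sub_pos.2 h).le (sq_nonneg (w₁ + w₂ - 2 * z)),
    mul_nonneg (sub_pos.2 h).le (sq_nonneg (w₁ + w₂))]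

theorem strictMono_curve (w : ℝ) : StrictMono fun z : ℝ => (z - w) * (z ^ 2 + w ^ 2) := by
  intro z₁ z₂ h
  nlinarith [mul_pos (sub_pos.2 h) (mul_pos (sub_pos.2 h) (sub_pos.2 h)),
    mul_nonneg (sub_pos.2 h).le (sq_nonneg (z₁ + z₂ - 2 * w)),
    mul_nonneg (sub_pos.2 h).le (sq_nonneg (z₁ + z₂))]

section Curve

variable {z w : ℝ}

theorem one_half_le_of_curve (h : (z - w) * (z ^ 2 + w ^ 2) = 1) : 1 / 2 ≤ z ^ 2 + w ^ 2 := by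
  have hS : 0 ≤ z ^ 2 + w ^ 2 := by positivity
  -- `(z - w)² ≤ 2 (z² + w²)` turns `(z - w) (z² + w²) = 1` into `(z² + w²)³ ≥ 1 / 2`
  have hcube : 1 ≤ 2 * (z ^ 2 + w ^ 2) ^ 3 := by
    nlinarith [mul_le_mul_of_nonneg_right (by nlinarith [sq_nonneg (z + w)] :
      (z - w) ^ 2 ≤ 2 * (z ^ 2 + w ^ 2)) (mul_nonneg hS hS)]
  nlinarith [sq_nonneg (z ^ 2 + w ^ 2), sq_nonneg (z ^ 2 + w ^ 2 - 1 / 2)]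

theorem abs_sub_le_two_of_curve (h : (z - w) * (z ^ 2 + w ^ 2) = 1) : |w - z| ≤ 2 := by
  have hS := one_half_le_of_curve h
  have hpos : 0 < z - w := by nlinarith
  rw [abs_sub_comm, abs_of_pos hpos]
  nlinarith

theorem one_quarter_le_of_curve (h : (z - w) * (z ^ 2 + w ^ 2) = 1) :
    1 / 4 ≤ 3 * w ^ 2 - 2 * z * w + z ^ 2 := by
  nlinarith [one_half_le_of_curve h, sq_nonneg (z - 2 * w)]

end Curve

section GraphOnCurve

variable {φ : ℝ → ℝ}

theorem eq_of_curve {ψ : ℝ → ℝ} (hφ : ∀ z, (z - φ z) * (z ^ 2 + φ z ^ 2) = 1)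
    (hψ : ∀ z, (z - ψ z) * (z ^ 2 + ψ z ^ 2) = 1) : φ = ψ :=
  funext fun z => (strictAnti_curve z).injective ((hφ z).trans (hψ z).symm)

theorem strictMono_of_curve (hφ : ∀ z, (z - φ z) * (z ^ 2 + φ z ^ 2) = 1) : StrictMono φ := by
  intro z₁ z₂ h
  by_contra! hle
  have := (strictMono_curve (φ z₁) h).trans_le ((strictAnti_curve z₂).antitone hle)
  simp only [hφ] at this
  exact lt_irrefl _ this

theorem curve_of_quartic (hmono : StrictMono φ) (hcont : Continuous φ)
    (heq : ∀ z, z ^ 4 - z = φ z ^ 4 + φ z) : ∀ z, (z - φ z) * (z ^ 2 + φ z ^ 2) = 1 := by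
  obtain ⟨z₀, hz₀⟩ : ∃ z₀, ∀ z ≠ z₀, z + φ z ≠ 0 := by
    by_cases h : ∃ z₀, z₀ + φ z₀ = 0
    · obtain ⟨z₀, hz₀⟩ := h
      exact ⟨z₀, fun z hz h' => hz ((strictMono_id.add hmono).injective (h'.trans hz₀.symm))⟩
    · push Not at h
      exact ⟨0, fun z _ => h z⟩
  have hext := Continuous.ext_on (dense_compl_singleton z₀) (by fun_prop) continuous_const
    (fun z hz => ((quartic_eq_iff z (φ z)).1 (heq z)).resolve_left (hz₀ z hz))
  exact congrFun hext

theorem isAnalyticDiffeo_of_curve (hφ : ∀ z, (z - φ z) * (z ^ 2 + φ z ^ 2) = 1)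
    (han : ∀ z, AnalyticAt ℝ φ z) : IsAnalyticDiffeo φ := by
  have hmono := strictMono_of_curve hφ
  have hcont : Continuous φ := continuous_iff_continuousAt.2 fun z => (han z).continuousAt
  have hnear z := abs_le.1 (abs_sub_le_two_of_curve (hφ z))
  have htop : Tendsto φ atTop atTop :=
    tendsto_atTop_mono (f := fun z => z - 2) (fun z => by linarith [hnear z])
      (tendsto_atTop_add_const_right _ (-2) tendsto_id)
  have hbot : Tendsto φ atBot atBot :=
    tendsto_atBot_mono (f := fun z => z + 2) (fun z => by linarith [hnear z])
      (tendsto_atBot_add_const_right _ 2 tendsto_id)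
  -- the curve is invariant under `(z, w) ↦ (-w, -z)`, which exchanges `φ` and its inverse
  have hinv : Function.RightInverse (fun y => -φ (-y)) φ := fun y =>
    (strictAnti_curve (-φ (-y))).injective ((hφ _).trans (by linear_combination -hφ (-y)))
  exact ⟨han, hmono, ⟨hmono.injective, hcont.surjective htop hbot⟩, fun y => -φ (-y),
    fun y => ((han (-y)).comp (analyticAt_id.neg)).neg,
    fun z => hmono.injective (hinv (φ z)), hinv⟩

theorem deriv_mul_eq_of_curve (hφ : ∀ z, (z - φ z) * (z ^ 2 + φ z ^ 2) = 1) {z : ℝ}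
    (hd : DifferentiableAt ℝ φ z) :
    deriv φ z * (3 * φ z ^ 2 - 2 * z * φ z + z ^ 2) = 3 * z ^ 2 - 2 * z * φ z + φ z ^ 2 := by
  have hφ' := hd.hasDerivAt
  have hG := ((hasDerivAt_id z).sub hφ').mul (((hasDerivAt_id z).pow 2).add (hφ'.pow 2))
  rw [show (id - φ) * (id ^ 2 + φ ^ 2) = fun _ => (1 : ℝ) from funext hφ] at hG
  have h0 := hG.unique (hasDerivAt_const z 1)
  simp only [Pi.sub_apply, Pi.add_apply, Pi.pow_apply, id_eq] at h0
  linear_combination -h0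

theorem abs_deriv_le_of_curve (hφ : ∀ z, (z - φ z) * (z ^ 2 + φ z ^ 2) = 1) {z : ℝ}
    (hd : DifferentiableAt ℝ φ z) : |deriv φ z| ≤ 4 := by
  have hD := one_quarter_le_of_curve (hφ z)
  have h := deriv_mul_eq_of_curve hφ hd
  rw [abs_le]
  constructor <;>
    nlinarith [sq_nonneg (z - 3 * φ z), sq_nonneg (z - φ z), sq_nonneg z, sq_nonneg (φ z)]

theorem abs_sub_mul_deriv_le_of_curve (hφ : ∀ z, (z - φ z) * (z ^ 2 + φ z ^ 2) = 1) {z : ℝ}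
    (hd : DifferentiableAt ℝ φ z) : |φ z - z * deriv φ z| ≤ 12 := by
  have hD := one_quarter_le_of_curve (hφ z)
  have h : (3 * φ z ^ 2 - 2 * z * φ z + z ^ 2) * (φ z - z * deriv φ z) = -3 := by
    linear_combination (-z) * deriv_mul_eq_of_curve hφ hd - 3 * hφ z
  rw [abs_le]
  constructor <;> nlinarith

end GraphOnCurve

theorem tendsto_div_self_of_abs_sub_le {l : Filter ℝ} {f : ℝ → ℝ} {C : ℝ}
    (hl : Tendsto (fun z => |z|) l atTop) (hf : ∀ z, |f z - z| ≤ C) :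
    Tendsto (fun z => f z / z) l (𝓝 1) := by
  rw [tendsto_iff_norm_sub_tendsto_zero]
  refine squeeze_zero_norm' (a := fun z => C / |z|) ?_ (tendsto_const_nhds.div_atTop hl)
  filter_upwards [hl.eventually_gt_atTop 0] with z hz
  rw [norm_norm, Real.norm_eq_abs, div_sub_one (abs_pos.1 hz), abs_div]
  exact div_le_div_of_nonneg_right (hf z) hz.le

section Cardano

def cardanoE (p q : ℝ) : ℝ := √(q ^ 2 / 4 + p ^ 3 / 27) + q / 2

/-- Cardano's root `∛(√Δ - q/2) - ∛(√Δ + q/2)` of `t³ + p t + q`, `Δ = q²/4 + p³/27`, with the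
first cube root written as `p / (3β)`, `β = ∛(√Δ + q/2)`, since `(√Δ - q/2)(√Δ + q/2) = p³/27`. -/
def cardanoRoot (p q : ℝ) : ℝ := p / (3 * cardanoE p q ^ (3⁻¹ : ℝ)) - cardanoE p q ^ (3⁻¹ : ℝ)

variable {p q : ℝ}

theorem cardano_discriminant_pos (hp : 0 ≤ p) (h : 0 < p ∨ 0 < q) : 0 < q ^ 2 / 4 + p ^ 3 / 27 := by
  rcases h with h | h <;> positivity

theorem cardanoE_pos (hp : 0 ≤ p) (h : 0 < p ∨ 0 < q) : 0 < cardanoE p q := by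
  rcases h with h | h
  · have : |q| / 2 < √(q ^ 2 / 4 + p ^ 3 / 27) :=
      (lt_sqrt (by positivity)).2 (by rw [div_pow, sq_abs]; linarith [pow_pos h 3])
    unfold cardanoE
    linarith [neg_abs_le q]
  · unfold cardanoE
    positivity

theorem cardanoRoot_isRoot (hp : 0 ≤ p) (h : 0 < p ∨ 0 < q) :
    cardanoRoot p q ^ 3 + p * cardanoRoot p q + q = 0 := by
  have he := cardanoE_pos hp h
  set β := cardanoE p q ^ (3⁻¹ : ℝ) with hβ_def
  have hβ : β ^ 3 = cardanoE p q := rpow_inv_natCast_pow he.le (by norm_num)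
  have hβ0 : β ≠ 0 := by positivity
  have hquad : cardanoE p q ^ 2 - q * cardanoE p q = p ^ 3 / 27 := by
    unfold cardanoE; linear_combination sq_sqrt (cardano_discriminant_pos hp h).le
  have hexpand : cardanoRoot p q ^ 3 + p * cardanoRoot p q + q =
      (p ^ 3 - 27 * (β ^ 3) ^ 2 + 27 * q * β ^ 3) / (27 * β ^ 3) := by
    rw [cardanoRoot, ← hβ_def]
    field_simp
    ring
  rw [hexpand, hβ, div_eq_zero_iff]
  left
  linear_combination -27 * hquad

theorem AnalyticAt.cardanoRoot {f g : ℝ → ℝ} {x : ℝ} (hf : AnalyticAt ℝ f x)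
    (hg : AnalyticAt ℝ g x) (hp : 0 ≤ f x) (h : 0 < f x ∨ 0 < g x) :
    AnalyticAt ℝ (fun y => _root_.cardanoRoot (f y) (g y)) x := by
  have hΔ : AnalyticAt ℝ (fun y => g y ^ 2 / 4 + f y ^ 3 / 27) x := by fun_prop
  have hE : AnalyticAt ℝ (fun y => cardanoE (f y) (g y)) x :=
    (hΔ.sqrt (cardano_discriminant_pos hp h)).add hg.div_const
  have hβ := hE.rpow_const (cardanoE_pos hp h) 3⁻¹
  exact (hf.div (analyticAt_const.mul hβ)
    (mul_pos three_pos (rpow_pos_of_pos (cardanoE_pos hp h) _)).ne').sub hβ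

end Cardano

/-- Substituting `w = z / 3 + t` turns `(z - w) (z² + w²) = 1` into the depressed cubic
`t³ + (2z²/3) t + (1 - 20z³/27) = 0`. -/
def curveFun (z : ℝ) : ℝ := z / 3 + cardanoRoot (2 * z ^ 2 / 3) (1 - 20 * z ^ 3 / 27)

theorem curve_cubic_coeff_pos_or_pos (z : ℝ) : 0 < 2 * z ^ 2 / 3 ∨ 0 < 1 - 20 * z ^ 3 / 27 := by
  rcases eq_or_ne z 0 with rfl | hz
  · norm_num
  · exact Or.inl (by positivity)

theorem curveFun_curve (z : ℝ) : (z - curveFun z) * (z ^ 2 + curveFun z ^ 2) = 1 := by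
  have h := cardanoRoot_isRoot (by positivity) (curve_cubic_coeff_pos_or_pos z)
  unfold curveFun
  linear_combination -h

theorem analyticAt_curveFun (z : ℝ) : AnalyticAt ℝ curveFun z :=
  analyticAt_id.div_const.add
    (AnalyticAt.cardanoRoot (by fun_prop) (by fun_prop) (by positivity)
      (curve_cubic_coeff_pos_or_pos z))

/-- There is a unique increasing real analytic diffeomorphism `φ` of `ℝ` with
`z⁴ − z = φ(z)⁴ + φ(z)`; moreover `φ′` and `φ − z·φ′` are globally bounded and
`φ(z)/z → 1` as `z → ±∞`. -/
theorem stmt16 :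
    (∃! φ : ℝ → ℝ, IsAnalyticDiffeo φ ∧ ∀ z : ℝ, z ^ 4 - z = (φ z) ^ 4 + φ z) ∧
    ∀ φ : ℝ → ℝ, IsAnalyticDiffeo φ → (∀ z : ℝ, z ^ 4 - z = (φ z) ^ 4 + φ z) →
      (∃ C : ℝ, ∀ z : ℝ, |deriv φ z| ≤ C) ∧
      (∃ C : ℝ, ∀ z : ℝ, |φ z - z * deriv φ z| ≤ C) ∧
      Filter.Tendsto (fun z : ℝ => φ z / z) Filter.atTop (𝓝 1) ∧
      Filter.Tendsto (fun z : ℝ => φ z / z) Filter.atBot (𝓝 1) := by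
  have hcurve : ∀ φ : ℝ → ℝ, IsAnalyticDiffeo φ → (∀ z, z ^ 4 - z = φ z ^ 4 + φ z) →
      ∀ z, (z - φ z) * (z ^ 2 + φ z ^ 2) = 1 := fun φ hd heq =>
    curve_of_quartic hd.2.1 (continuous_iff_continuousAt.2 fun z => (hd.1 z).continuousAt) heq
  refine ⟨⟨curveFun, ⟨isAnalyticDiffeo_of_curve curveFun_curve analyticAt_curveFun, fun z =>
      (quartic_eq_iff z _).2 (Or.inr (curveFun_curve z))⟩,
    fun φ ⟨hd, heq⟩ => eq_of_curve (hcurve φ hd heq) curveFun_curve⟩, fun φ hd heq => ?_⟩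
  have hφ := hcurve φ hd heq
  have hdiff z : DifferentiableAt ℝ φ z := (hd.1 z).differentiableAt
  have hnear z : |φ z - z| ≤ 2 := abs_sub_le_two_of_curve (hφ z)
  exact ⟨⟨4, fun z => abs_deriv_le_of_curve hφ (hdiff z)⟩,
    ⟨12, fun z => abs_sub_mul_deriv_le_of_curve hφ (hdiff z)⟩,
    tendsto_div_self_of_abs_sub_le tendsto_abs_atTop_atTop hnear,
    tendsto_div_self_of_abs_sub_le tendsto_abs_atBot_atTop hnear⟩
end
end

section
/- Let P(z) = z·(z³ − 1)·(z³ + 1) = z⁷ − z. There exist real numbers a, b with 0 < a < b such that, setting Q(z) = z·(z³ − a)·(z³ − b), the set of real critical values of Q equals the set of real critical values of P: { Q(z) : z ∈ ℝ, Q′(z) = 0 } = { P(z) : z ∈ ℝ, P′(z) = 0 }. -/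
/-!
Writing `Q(z) = z(z³ − a)(z³ − b) = z⁷ − (a + b)z⁴ + ab·z`, we have `Q' = 7z⁶ − 4(a + b)z³ + ab`,
a quadratic in `z³`. So `Q` has exactly the critical points `α, β > 0` as soon as
`a + b = 7(α³ + β³)/4` and `ab = 7α³β³`, and its critical values are then
`3α⁴(7β³ − α³)/4` and `3β⁴(7α³ − β³)/4`. These are opposite exactly when `r = α/β` is a root
of the palindromic polynomial `r⁷ − 7r⁴ − 7r³ + 1`, which has a root in `[2, 3]`. Since
`Q_{λ³a, λ³b}(λz) = λ⁷ Q_{a,b}(z)`, a rescaling `α = Lr`, `β = L` makes the critical values equal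
to those of `P = z⁷ − z`, namely `∓(6/7)z₀` with `z₀⁶ = 1/7`. For `r ≥ 2` the discriminant
of `t² − (a + b)t + ab` is positive, so `0 < a < b` are real.
-/

noncomputable section

def septic (a b : ℝ) (w : ℝ) : ℝ := w * (w ^ 3 - a) * (w ^ 3 - b)

def criticalValues (f : ℝ → ℝ) : Set ℝ := {v | ∃ z, deriv f z = 0 ∧ v = f z}

lemma criticalValues_eq_pair {f : ℝ → ℝ} {x y : ℝ} (h : ∀ z, deriv f z = 0 ↔ z = x ∨ z = y) :
    criticalValues f = {f x, f y} := by
  ext v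
  simp only [criticalValues, Set.mem_ofPred_eq, h, Set.mem_insert_iff, Set.mem_singleton_iff]
  constructor
  · rintro ⟨z, rfl | rfl, rfl⟩ <;> simp
  · rintro (rfl | rfl)
    exacts [⟨x, .inl rfl, rfl⟩, ⟨y, .inr rfl, rfl⟩]

lemma septic_eq (a b z : ℝ) : septic a b z = z ^ 7 - (a + b) * z ^ 4 + a * b * z := by
  unfold septic; ring

lemma deriv_septic (a b z : ℝ) :
    deriv (septic a b) z = 7 * z ^ 6 - 4 * (a + b) * z ^ 3 + a * b := by
  have h3 : HasDerivAt (fun w : ℝ => w ^ 3) (3 * z ^ 2) z := by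
    simpa using hasDerivAt_pow 3 z
  have h := ((hasDerivAt_id z).mul (h3.sub_const a)).mul (h3.sub_const b)
  rw [show deriv (septic a b) z = _ from h.deriv]
  simp only [id, Pi.mul_apply]
  ring

section CriticalPoints

variable {a b α β : ℝ} (hs : a + b = 7 / 4 * (α ^ 3 + β ^ 3)) (hp : a * b = 7 * α ^ 3 * β ^ 3)
include hs hp

lemma deriv_septic_eq_zero_iff (z : ℝ) : deriv (septic a b) z = 0 ↔ z = α ∨ z = β := by
  have hfac : deriv (septic a b) z = 7 * (z ^ 3 - α ^ 3) * (z ^ 3 - β ^ 3) := by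
    rw [deriv_septic, hs, hp]; ring
  have hcube : ∀ w : ℝ, z ^ 3 = w ^ 3 ↔ z = w := fun _ => Odd.pow_inj (by decide)
  rw [hfac, mul_eq_zero, mul_eq_zero, sub_eq_zero, sub_eq_zero, hcube, hcube]
  norm_num

lemma septic_apply_critical_point :
    septic a b α = 3 / 4 * α ^ 4 * (7 * β ^ 3 - α ^ 3) := by
  rw [septic_eq, hs, hp]; ring

end CriticalPoints

lemma exists_pos_lt_of_sq_gt {s p : ℝ} (hs : 0 < s) (hp : 0 < p) (hd : 4 * p < s ^ 2) :
    ∃ a b : ℝ, 0 < a ∧ a < b ∧ a + b = s ∧ a * b = p := by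
  set d := Real.sqrt (s ^ 2 - 4 * p)
  have hd2 : d ^ 2 = s ^ 2 - 4 * p := Real.sq_sqrt (by linarith)
  have hdpos : 0 < d := Real.sqrt_pos.mpr (by linarith)
  have hds : d < s := by nlinarith
  exact ⟨(s - d) / 2, (s + d) / 2, by linarith, by linarith, by ring,
    by linear_combination (-1 / 4 : ℝ) * hd2⟩

lemma exists_pos_pow_eq {x : ℝ} (hx : 0 < x) {n : ℕ} (hn : n ≠ 0) : ∃ y : ℝ, 0 < y ∧ y ^ n = x :=
  ⟨x ^ (n⁻¹ : ℝ), by positivity, Real.rpow_inv_natCast_pow hx.le hn⟩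

lemma exists_root_palindromic : ∃ r : ℝ, 2 ≤ r ∧ r ^ 7 - 7 * r ^ 4 - 7 * r ^ 3 + 1 = 0 := by
  have hc : ContinuousOn (fun x : ℝ => x ^ 7 - 7 * x ^ 4 - 7 * x ^ 3 + 1) (Set.Icc 2 3) := by
    fun_prop
  obtain ⟨r, hr, hr0⟩ := intermediate_value_Icc (by norm_num) hc (by norm_num : (0 : ℝ) ∈ _)
  exact ⟨r, hr.1, hr0⟩

lemma criticalValues_pow_seven_sub_self {z₀ : ℝ} (hz₀ : z₀ ^ 6 = 1 / 7) :
    criticalValues (fun w : ℝ => w * (w ^ 3 - 1) * (w ^ 3 + 1)) =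
      {-(6 / 7 * z₀), 6 / 7 * z₀} := by
  have hP : (fun w : ℝ => w * (w ^ 3 - 1) * (w ^ 3 + 1)) = septic 1 (-1) := by
    funext w; unfold septic; ring
  have hs : (1 : ℝ) + -1 = 7 / 4 * (z₀ ^ 3 + (-z₀) ^ 3) := by ring
  have hp : (1 : ℝ) * -1 = 7 * z₀ ^ 3 * (-z₀) ^ 3 := by linear_combination (7 : ℝ) * hz₀
  rw [hP, criticalValues_eq_pair (deriv_septic_eq_zero_iff hs hp), septic_eq, septic_eq]
  congr 2
  · linear_combination z₀ * hz₀
  · linear_combination -z₀ * hz₀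

/-- There exist `0 < a < b` such that `Q(z) = z(z³−a)(z³−b)` has the same set of real
critical values as `P(z) = z(z³−1)(z³+1) = z⁷ − z`. -/
theorem stmt18 :
    ∃ a b : ℝ, 0 < a ∧ a < b ∧
      {v : ℝ | ∃ z : ℝ,
          deriv (fun w : ℝ => w * (w ^ 3 - a) * (w ^ 3 - b)) z = 0 ∧
          v = z * (z ^ 3 - a) * (z ^ 3 - b)} =
        {v : ℝ | ∃ z : ℝ,
          deriv (fun w : ℝ => w * (w ^ 3 - 1) * (w ^ 3 + 1)) z = 0 ∧
          v = z * (z ^ 3 - 1) * (z ^ 3 + 1)} := by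
  obtain ⟨z₀, hz₀, hz₀6⟩ :=
    exists_pos_pow_eq (by norm_num : (0 : ℝ) < 1 / 7) (by norm_num : 6 ≠ 0)
  obtain ⟨r, hr, hr0⟩ := exists_root_palindromic
  have hr3 : 8 ≤ r ^ 3 := by nlinarith [pow_le_pow_left₀ (by norm_num) hr 3]
  have hK : 0 < 7 * r ^ 3 - 1 := by linarith
  obtain ⟨L, hL, hL7⟩ := exists_pos_pow_eq (n := 7)
    (by positivity : 0 < 8 * z₀ / (7 * (7 * r ^ 3 - 1))) (by norm_num)
  have hL7' : L ^ 7 * (7 * (7 * r ^ 3 - 1)) = 8 * z₀ := by rw [hL7]; field_simp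
  have hdisc : 4 * (7 * (L * r) ^ 3 * L ^ 3) < (7 / 4 * ((L * r) ^ 3 + L ^ 3)) ^ 2 := by
    have h : 28 * r ^ 3 < 49 / 16 * (r ^ 3 + 1) ^ 2 := by nlinarith
    linear_combination mul_lt_mul_of_pos_left h (pow_pos hL 6)
  obtain ⟨a, b, ha, hab, hs, hp⟩ := exists_pos_lt_of_sq_gt (by positivity) (by positivity) hdisc
  refine ⟨a, b, ha, hab, ?_⟩
  change criticalValues (septic a b) = criticalValues _
  rw [criticalValues_pow_seven_sub_self hz₀6,
    criticalValues_eq_pair (deriv_septic_eq_zero_iff hs hp), septic_apply_critical_point hs hp,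
    septic_apply_critical_point (α := L) (β := L * r) (hs.trans (by ring)) (hp.trans (by ring))]
  congr 2
  · linear_combination (-3 / 4 * L ^ 7) * hr0 - 3 / 28 * hL7'
  · linear_combination 3 / 28 * hL7'
end
end

section
/- Let a, b be real numbers with a > 0, b > 0 and 100·a² < 273·b. Then the polynomial Q₁′(z) = 13z¹² + 10a·z⁹ + 7b·z⁶ + 4ab·z³, which is the derivative of Q₁(z) = z⁴·(z³ + a)·(z⁶ + b), has exactly one nonzero real root; this root is negative and simple (i.e. the derivative of Q₁′ does not vanish at it). -/
/-!
Substituting `t = z³` gives `Q₁′(z) = z³ · S(z³)` with `S(t) = 13t³ + 10a·t² + 7b·t + 4ab`.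
Since `39 · S′(t) = (39t + 10a)² + (273b - 100a²) > 0`, the cubic `S` is strictly increasing;
as `S(-a) = -3a(a² + b) < 0 < 4ab = S(0)`, it has exactly one real root `t₀`, which is negative,
and the nonzero roots of `Q₁′` are exactly the real cube roots of `t₀`, i.e. a single `z₀ < 0`.
At that root `(Q₁′)′(z₀) = 3z₀²·S(t₀) + 3z₀⁵·S′(t₀) = 3z₀⁵·S′(t₀) ≠ 0`.
-/

def polarCubic (a b t : ℝ) : ℝ := 13 * t ^ 3 + 10 * a * t ^ 2 + 7 * b * t + 4 * a * b

def polarCubicDeriv (a b t : ℝ) : ℝ := 39 * t ^ 2 + 20 * a * t + 7 * b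

theorem hasDerivAt_polarCubic (a b t : ℝ) :
    HasDerivAt (polarCubic a b) (polarCubicDeriv a b t) t := by
  refine (((((hasDerivAt_pow 3 t).const_mul 13).fun_add
    ((hasDerivAt_pow 2 t).const_mul (10 * a))).fun_add
    ((hasDerivAt_id' t).const_mul (7 * b))).add_const (4 * a * b)).congr_deriv ?_
  unfold polarCubicDeriv
  push_cast
  ring

theorem polarCubicDeriv_pos {a b : ℝ} (hab : 100 * a ^ 2 < 273 * b) (t : ℝ) :
    0 < polarCubicDeriv a b t := by
  unfold polarCubicDeriv
  nlinarith [sq_nonneg (39 * t + 10 * a)]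

theorem strictMono_polarCubic {a b : ℝ} (hab : 100 * a ^ 2 < 273 * b) :
    StrictMono (polarCubic a b) :=
  strictMono_of_deriv_pos fun t ↦ by
    rw [(hasDerivAt_polarCubic a b t).deriv]
    exact polarCubicDeriv_pos hab t

theorem polarCubic_neg_self_neg {a b : ℝ} (ha : 0 < a) (hb : 0 < b) : polarCubic a b (-a) < 0 := by
  have h : polarCubic a b (-a) = -3 * a * (a ^ 2 + b) := by unfold polarCubic; ring
  rw [h]
  nlinarith [mul_pos ha (add_pos (pow_pos ha 2) hb)]

theorem polarCubic_zero_pos {a b : ℝ} (ha : 0 < a) (hb : 0 < b) : 0 < polarCubic a b 0 := by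
  unfold polarCubic
  nlinarith [mul_pos ha hb]

theorem exists_polarCubic_cube_eq_zero {a b : ℝ} (ha : 0 < a) (hb : 0 < b)
    (hab : 100 * a ^ 2 < 273 * b) : ∃ z < 0, polarCubic a b (z ^ 3) = 0 := by
  have hcont : Continuous fun z : ℝ ↦ polarCubic a b (z ^ 3) := by
    unfold polarCubic
    fun_prop
  have hcube : (-(a + 1)) ^ 3 ≤ -a := by nlinarith [pow_pos ha 2, pow_pos ha 3]
  have hleft : polarCubic a b ((-(a + 1)) ^ 3) < 0 :=
    ((strictMono_polarCubic hab).monotone hcube).trans_lt (polarCubic_neg_self_neg ha hb)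
  have hright : 0 < polarCubic a b (0 ^ 3) := by
    simpa using polarCubic_zero_pos ha hb
  obtain ⟨z, ⟨-, hz⟩, hz₀⟩ := intermediate_value_Ioo (by linarith) hcont.continuousOn
    ⟨hleft, hright⟩
  exact ⟨z, hz, hz₀⟩

theorem hasDerivAt_cube_mul_comp_cube {S : ℝ → ℝ} {S' z : ℝ} (hS : HasDerivAt S S' (z ^ 3)) :
    HasDerivAt (fun w ↦ w ^ 3 * S (w ^ 3)) (3 * z ^ 2 * S (z ^ 3) + 3 * z ^ 5 * S') z := by
  have hcube : HasDerivAt (fun w : ℝ ↦ w ^ 3) (3 * z ^ 2) z := by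
    simpa using hasDerivAt_pow 3 z
  refine (hcube.fun_mul (HasDerivAt.comp (h := fun w : ℝ ↦ w ^ 3) z hS hcube)).congr_deriv ?_
  simp only [Function.comp_apply]
  ring

theorem hasDerivAt_pow_four_mul_cube_add_mul_pow_six_add (a b z : ℝ) :
    HasDerivAt (fun w : ℝ ↦ w ^ 4 * (w ^ 3 + a) * (w ^ 6 + b))
      (13 * z ^ 12 + 10 * a * z ^ 9 + 7 * b * z ^ 6 + 4 * a * b * z ^ 3) z := by
  refine (((hasDerivAt_pow 4 z).fun_mul ((hasDerivAt_pow 3 z).add_const a)).fun_mul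
    ((hasDerivAt_pow 6 z).add_const b)).congr_deriv ?_
  push_cast
  ring

/-- For `a, b > 0` with `100a² < 273b`, the polynomial
`Q₁′(z) = 13z¹² + 10a·z⁹ + 7b·z⁶ + 4ab·z³` — which is the derivative of
`Q₁(z) = z⁴(z³+a)(z⁶+b)` — has exactly one nonzero real root; it is negative and simple. -/
theorem stmt19 (a b : ℝ) (ha : 0 < a) (hb : 0 < b) (hab : 100 * a ^ 2 < 273 * b) :
    (∀ z : ℝ, deriv (fun w : ℝ => w ^ 4 * (w ^ 3 + a) * (w ^ 6 + b)) z =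
        13 * z ^ 12 + 10 * a * z ^ 9 + 7 * b * z ^ 6 + 4 * a * b * z ^ 3) ∧
    ∃ z₀ : ℝ, z₀ < 0 ∧
      13 * z₀ ^ 12 + 10 * a * z₀ ^ 9 + 7 * b * z₀ ^ 6 + 4 * a * b * z₀ ^ 3 = 0 ∧
      deriv (fun z : ℝ =>
        13 * z ^ 12 + 10 * a * z ^ 9 + 7 * b * z ^ 6 + 4 * a * b * z ^ 3) z₀ ≠ 0 ∧
      ∀ z : ℝ, z ≠ 0 →
        13 * z ^ 12 + 10 * a * z ^ 9 + 7 * b * z ^ 6 + 4 * a * b * z ^ 3 = 0 → z = z₀ := by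
  have hQ (z : ℝ) : 13 * z ^ 12 + 10 * a * z ^ 9 + 7 * b * z ^ 6 + 4 * a * b * z ^ 3 =
      z ^ 3 * polarCubic a b (z ^ 3) := by
    unfold polarCubic
    ring
  have hmono : StrictMono fun z : ℝ ↦ polarCubic a b (z ^ 3) :=
    (strictMono_polarCubic hab).comp (Odd.strictMono_pow (by decide))
  obtain ⟨z₀, hz₀, hroot⟩ := exists_polarCubic_cube_eq_zero ha hb hab
  refine ⟨fun z ↦ (hasDerivAt_pow_four_mul_cube_add_mul_pow_six_add a b z).deriv, z₀, hz₀,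
    by rw [hQ, hroot, mul_zero], ?_, fun z hz hQz ↦ ?_⟩
  · rw [funext hQ, (hasDerivAt_cube_mul_comp_cube (hasDerivAt_polarCubic a b _)).deriv, hroot]
    have hz₀5 : z₀ ^ 5 < 0 := Odd.pow_neg (by decide) hz₀
    nlinarith [polarCubicDeriv_pos hab (z₀ ^ 3)]
  · have hSz : polarCubic a b (z ^ 3) = 0 :=
      (mul_eq_zero.mp (hQ z ▸ hQz)).resolve_left (pow_ne_zero 3 hz)
    exact hmono.injective (hSz.trans hroot.symm)
end
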